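/- (Linearized Darrozès–Guiraud inequality.) Let d ≥ 1, let n ∈ ℝ^d be a unit vector, and let dμ(v) = √(2π) M(v) (v·n)_+ dv, which is a probability measure on ℝ^d. Let g : ℝ^d → ℝ be measurable with ∫ g² dμ < ∞ and ∫_{ℝ^d} g(v)² M(v) |v·n| dv < ∞, and suppose g satisfies the diffuse-reflection condition g(v) = ∫ g dμ for almost every v with v·n < 0. Then √(2π) ∫_{ℝ^d} g(v)² M(v) (v·n) dv = ∫_{ℝ^d} ( g(v) − ∫ g dμ )² dμ(v) ≥ 0. -/

import Mathlib

/-!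
Split `v·n = (v·n)₊ - (v·n)₋`. The outgoing part of `√(2π) ∫ g² M (v·n)` is `∫ g² dμ` by
the definition of `μ`; on incoming velocities `g` equals the constant `c = ∫ g dμ`, so the
incoming part is `c² √(2π) ∫ M (v·n)₋ = c²`. Both this and the normalisation of `μ` come from
`∫ M (v·n)₊ = 𝔼[Z₊] = 1/√(2π)` for `Z = ⟨V, n⟩ ~ 𝒩(0, 1)`, which holds because `M` is the
density of the standard Gaussian (compare characteristic functions). The difference
`∫ g² dμ - c²` is the variance of `g` under the probability measure `μ`.
-/

open MeasureTheory Real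
open scoped InnerProductSpace

noncomputable section

/-- The standard Gaussian `M(v) = (2π)^{-d/2} exp(-|v|²/2)` on `ℝ^d`. -/
def gaussM {d : ℕ} (v : EuclideanSpace ℝ (Fin d)) : ℝ :=
  (2 * π) ^ (-(d : ℝ) / 2) * Real.exp (-‖v‖ ^ 2 / 2)

/-- The outgoing boundary measure `dμ(v) = √(2π) M(v) (v·n)_+ dv`. -/
def bdryMeasure (d : ℕ) (n : EuclideanSpace ℝ (Fin d)) :
    Measure (EuclideanSpace ℝ (Fin d)) :=
  volume.withDensity fun v =>
    ENNReal.ofReal (Real.sqrt (2 * π) * gaussM v * max ⟪v, n⟫_ℝ 0)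

open ProbabilityTheory GaussianFourier
open Complex (I)

lemma max_mul_zero_of_nonneg {a : ℝ} (ha : 0 ≤ a) (t : ℝ) : max (a * t) 0 = a * max t 0 := by
  rw [mul_max_of_nonneg _ _ ha, mul_zero]

lemma integral_eq_integral_max_zero_sub {α : Type*} [MeasurableSpace α] {μ : Measure α}
    {f : α → ℝ} (hf : Integrable f μ) :
    ∫ x, f x ∂μ = ∫ x, max (f x) 0 ∂μ - ∫ x, max (-f x) 0 ∂μ := by
  rw [← integral_sub hf.pos_part hf.neg_part]
  simp_rw [max_zero_sub_max_neg_zero_eq_self]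

lemma integral_sq_sub_integral_eq {Ω : Type*} [MeasurableSpace Ω] {μ : Measure Ω}
    [IsProbabilityMeasure μ] {g : Ω → ℝ} (hg : AEStronglyMeasurable g μ)
    (hg2 : Integrable (fun x => g x ^ 2) μ) :
    ∫ x, (g x - ∫ y, g y ∂μ) ^ 2 ∂μ = ∫ x, g x ^ 2 ∂μ - (∫ x, g x ∂μ) ^ 2 := by
  rw [← variance_eq_integral hg.aemeasurable,
    variance_eq_sub ((memLp_two_iff_integrable_sq hg).mpr hg2)]
  rfl

lemma integral_max_zero_gaussianReal : ∫ t, max t 0 ∂gaussianReal 0 1 = (√(2 * π))⁻¹ := by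
  have h : ∫ t in Set.Ioi 0, t * rexp (-(1 / 2 * t ^ 2)) = 1 := by
    have := integral_rpow_mul_exp_neg_mul_rpow (p := 2) (q := 1) (b := 1 / 2)
      (by norm_num) (by norm_num) (by norm_num)
    norm_num at this
    exact this
  rw [integral_gaussianReal_eq_integral_smul one_ne_zero,
    ← setIntegral_eq_integral_of_forall_compl_eq_zero (s := Set.Ioi 0)
      (fun t ht => by simp [max_eq_right (Set.notMem_Ioi.mp ht)])]
  calc _ = ∫ t in Set.Ioi 0, (√(2 * π))⁻¹ * (t * rexp (-(1 / 2 * t ^ 2))) := by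
        refine setIntegral_congr_fun measurableSet_Ioi fun t ht => ?_
        rw [gaussianPDFReal_def, smul_eq_mul, max_eq_left (le_of_lt ht)]
        norm_num
        ring_nf
    _ = _ := by rw [integral_const_mul, h, mul_one]

lemma integrable_max_zero_gaussianReal : Integrable (fun t => max t 0) (gaussianReal 0 1) :=
  ((memLp_id_gaussianReal 1).integrable le_rfl).pos_part

lemma stdGaussian_map_inner {E : Type*} [NormedAddCommGroup E] [InnerProductSpace ℝ E]
    [FiniteDimensional ℝ E] [MeasurableSpace E] [BorelSpace E] {n : E} (hn : ‖n‖ = 1) :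
    (stdGaussian E).map (fun v => ⟪v, n⟫_ℝ) = gaussianReal 0 1 := by
  have h := IsGaussian.map_eq_gaussianReal (μ := stdGaussian E) (innerSL ℝ n)
  rw [integral_strongDual_stdGaussian, variance_dual_stdGaussian, innerSL_apply_norm, hn] at h
  simpa [innerSL_apply_apply, real_inner_comm] using h

section

variable {d : ℕ}

lemma gaussM_nonneg (v : EuclideanSpace ℝ (Fin d)) : 0 ≤ gaussM v := by
  unfold gaussM; positivity

@[fun_prop]
lemma continuous_gaussM : Continuous (gaussM (d := d)) := by
  unfold gaussM; fun_prop

lemma gaussM_eq_mul_exp (v : EuclideanSpace ℝ (Fin d)) :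
    gaussM v = ((2 * π) ^ ((d : ℝ) / 2))⁻¹ * rexp (-(1 / 2) * ‖v‖ ^ 2) := by
  rw [gaussM, neg_div, rpow_neg (by positivity)]
  ring_nf

lemma integral_gaussM : ∫ v : EuclideanSpace ℝ (Fin d), gaussM v = 1 := by
  simp_rw [gaussM_eq_mul_exp]
  rw [integral_const_mul, integral_rexp_neg_mul_sq_norm (by norm_num), finrank_euclideanSpace_fin,
    show π / (1 / 2) = 2 * π by ring]
  exact inv_mul_cancel₀ (by positivity)

lemma integrable_gaussM : Integrable (gaussM (d := d)) :=
  Integrable.of_integral_ne_zero (by rw [integral_gaussM]; exact one_ne_zero)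

lemma charFun_withDensity_gaussM (t : EuclideanSpace ℝ (Fin d)) :
    charFun (volume.withDensity fun v => ENNReal.ofReal (gaussM v)) t =
      Complex.exp (-‖t‖ ^ 2 / 2) := by
  rw [charFun_apply, integral_withDensity_eq_integral_toReal_smul
    continuous_gaussM.measurable.ennreal_ofReal (by simp)]
  have hpos : (0 : ℝ) < (2 * π) ^ ((d : ℝ) / 2) := by positivity
  calc _ = (((2 * π) ^ ((d : ℝ) / 2))⁻¹ : ℝ) *
        ∫ v : EuclideanSpace ℝ (Fin d), Complex.exp (-(1 / 2) * ‖v‖ ^ 2 + I * ⟪t, v⟫_ℝ) := by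
        rw [← integral_const_mul]
        congr with v
        rw [ENNReal.toReal_ofReal (gaussM_nonneg _), gaussM_eq_mul_exp, real_inner_comm,
          Complex.real_smul, Complex.ofReal_mul, mul_assoc, Complex.ofReal_exp, ← Complex.exp_add]
        push_cast
        ring_nf
    _ = _ := by
        rw [integral_cexp_neg_mul_sq_norm_add (by norm_num), finrank_euclideanSpace_fin,
          show (π : ℂ) / (1 / 2) = ((2 * π : ℝ) : ℂ) by push_cast; ring,
          ← Complex.ofReal_natCast, ← Complex.ofReal_ofNat, ← Complex.ofReal_div,
          ← Complex.ofReal_cpow (by positivity), ← mul_assoc, ← Complex.ofReal_mul,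
          inv_mul_cancel₀ hpos.ne', Complex.ofReal_one, one_mul, Complex.I_sq]
        congr 1
        push_cast
        ring

lemma withDensity_gaussM_eq_stdGaussian :
    volume.withDensity (fun v => ENNReal.ofReal (gaussM v)) =
      stdGaussian (EuclideanSpace ℝ (Fin d)) := by
  have : IsFiniteMeasure (volume.withDensity fun v => ENNReal.ofReal (gaussM (d := d) v)) :=
    isFiniteMeasure_withDensity_ofReal integrable_gaussM.hasFiniteIntegral
  exact Measure.ext_of_charFun (funext fun t => by
    rw [charFun_withDensity_gaussM, charFun_stdGaussian])

lemma integral_gaussM_mul (F : EuclideanSpace ℝ (Fin d) → ℝ) :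
    ∫ v, gaussM v * F v = ∫ v, F v ∂stdGaussian (EuclideanSpace ℝ (Fin d)) := by
  rw [← withDensity_gaussM_eq_stdGaussian, integral_withDensity_eq_integral_toReal_smul
    continuous_gaussM.measurable.ennreal_ofReal (by simp)]
  simp_rw [ENNReal.toReal_ofReal (gaussM_nonneg _), smul_eq_mul]

lemma integrable_gaussM_mul_iff {F : EuclideanSpace ℝ (Fin d) → ℝ} :
    Integrable (fun v => gaussM v * F v) ↔
      Integrable F (stdGaussian (EuclideanSpace ℝ (Fin d))) := by
  rw [← withDensity_gaussM_eq_stdGaussian, integrable_withDensity_iff_integrable_smul'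
    continuous_gaussM.measurable.ennreal_ofReal (by simp)]
  simp_rw [ENNReal.toReal_ofReal (gaussM_nonneg _), smul_eq_mul]

lemma integral_gaussM_mul_comp_inner {n : EuclideanSpace ℝ (Fin d)} (hn : ‖n‖ = 1) {f : ℝ → ℝ}
    (hf : AEStronglyMeasurable f (gaussianReal 0 1)) :
    ∫ v, gaussM v * f ⟪v, n⟫_ℝ = ∫ t, f t ∂gaussianReal 0 1 := by
  rw [integral_gaussM_mul, ← stdGaussian_map_inner hn,
    integral_map (by fun_prop) (by rwa [stdGaussian_map_inner hn])]

lemma integrable_gaussM_mul_comp_inner {n : EuclideanSpace ℝ (Fin d)} (hn : ‖n‖ = 1) {f : ℝ → ℝ}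
    (hf : Integrable f (gaussianReal 0 1)) :
    Integrable fun v => gaussM v * f ⟪v, n⟫_ℝ := by
  rw [← stdGaussian_map_inner hn] at hf
  exact integrable_gaussM_mul_iff.mpr (hf.comp_measurable (by fun_prop))

lemma integral_gaussM_mul_max_inner {n : EuclideanSpace ℝ (Fin d)} (hn : ‖n‖ = 1) :
    ∫ v, gaussM v * max ⟪v, n⟫_ℝ 0 = (√(2 * π))⁻¹ := by
  rw [integral_gaussM_mul_comp_inner hn integrable_max_zero_gaussianReal.aestronglyMeasurable,
    integral_max_zero_gaussianReal]

lemma integral_bdryMeasure (n : EuclideanSpace ℝ (Fin d)) (f : EuclideanSpace ℝ (Fin d) → ℝ) :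
    ∫ v, f v ∂bdryMeasure d n = √(2 * π) * ∫ v, gaussM v * max ⟪v, n⟫_ℝ 0 * f v := by
  rw [bdryMeasure, integral_withDensity_eq_integral_toReal_smul (by fun_prop) (by simp),
    ← integral_const_mul]
  congr with v
  rw [ENNReal.toReal_ofReal (by positivity [gaussM_nonneg v]), smul_eq_mul]
  ring

lemma isProbabilityMeasure_bdryMeasure {n : EuclideanSpace ℝ (Fin d)} (hn : ‖n‖ = 1) :
    IsProbabilityMeasure (bdryMeasure d n) := by
  have h := (integrable_gaussM_mul_comp_inner hn integrable_max_zero_gaussianReal).const_mul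
    √(2 * π)
  constructor
  simp_rw [bdryMeasure, withDensity_apply _ MeasurableSet.univ, Measure.restrict_univ, mul_assoc]
  rw [← ofReal_integral_eq_lintegral_ofReal h
    (.of_forall fun v => by positivity [gaussM_nonneg v]), integral_const_mul,
    integral_gaussM_mul_max_inner hn, mul_inv_cancel₀ (by positivity), ENNReal.ofReal_one]

end

theorem linearized_darrozes_guiraud_general
    (d : ℕ)
    (n : EuclideanSpace ℝ (Fin d)) (hn : ‖n‖ = 1)
    (g : EuclideanSpace ℝ (Fin d) → ℝ) (hmeas : Measurable g)
    (hL2 : Integrable (fun v => g v ^ 2) (bdryMeasure d n))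
    (hint : Integrable (fun v => g v ^ 2 * gaussM v * |⟪v, n⟫_ℝ|) volume)
    (hbc : ∀ᵐ v : EuclideanSpace ℝ (Fin d) ∂volume,
      ⟪v, n⟫_ℝ < 0 → g v = ∫ w, g w ∂(bdryMeasure d n)) :
    IsProbabilityMeasure (bdryMeasure d n) ∧
    Real.sqrt (2 * π) * (∫ v : EuclideanSpace ℝ (Fin d), g v ^ 2 * gaussM v * ⟪v, n⟫_ℝ) =
      (∫ v, (g v - ∫ w, g w ∂(bdryMeasure d n)) ^ 2 ∂(bdryMeasure d n)) ∧
    0 ≤ Real.sqrt (2 * π) *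
      ∫ v : EuclideanSpace ℝ (Fin d), g v ^ 2 * gaussM v * ⟪v, n⟫_ℝ := by
  have hμ := isProbabilityMeasure_bdryMeasure hn
  set c := ∫ w, g w ∂bdryMeasure d n
  have hweight (v) : 0 ≤ g v ^ 2 * gaussM v := mul_nonneg (sq_nonneg _) (gaussM_nonneg v)
  have hflux : Integrable fun v => g v ^ 2 * gaussM v * ⟪v, n⟫_ℝ :=
    hint.mono' (by fun_prop) (.of_forall fun v => by
      rw [norm_mul, Real.norm_eq_abs, abs_of_nonneg (hweight v), Real.norm_eq_abs])
  have hout : √(2 * π) * ∫ v, max (g v ^ 2 * gaussM v * ⟪v, n⟫_ℝ) 0 =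
      ∫ v, g v ^ 2 ∂bdryMeasure d n := by
    rw [integral_bdryMeasure]
    congr 2 with v
    rw [max_mul_zero_of_nonneg (hweight v)]
    ring
  have hin : √(2 * π) * ∫ v, max (-(g v ^ 2 * gaussM v * ⟪v, n⟫_ℝ)) 0 = c ^ 2 := by
    have hae : (fun v => max (-(g v ^ 2 * gaussM v * ⟪v, n⟫_ℝ)) 0) =ᵐ[volume]
        fun v => c ^ 2 * (gaussM v * max ⟪v, -n⟫_ℝ 0) := by
      filter_upwards [hbc] with v hv
      rw [← mul_neg, max_mul_zero_of_nonneg (hweight v), inner_neg_right]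
      rcases lt_or_ge ⟪v, n⟫_ℝ 0 with hincoming | houtgoing
      · rw [hv hincoming]
        ring
      · simp [max_eq_right (neg_nonpos.mpr houtgoing)]
    rw [integral_congr_ae hae, integral_const_mul,
      integral_gaussM_mul_max_inner (by rwa [norm_neg]), mul_left_comm,
      mul_inv_cancel₀ (by positivity), mul_one]
  have key : √(2 * π) * ∫ v, g v ^ 2 * gaussM v * ⟪v, n⟫_ℝ =
      ∫ v, (g v - c) ^ 2 ∂bdryMeasure d n := by
    rw [integral_eq_integral_max_zero_sub hflux, mul_sub, hout, hin,
      integral_sq_sub_integral_eq hmeas.aestronglyMeasurable hL2]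
  exact ⟨hμ, key, key ▸ integral_nonneg fun v => sq_nonneg _⟩

/-- Linearized Darrozès–Guiraud inequality: `dμ = √(2π) M (v·n)_+ dv` is a
probability measure, and if `g` is square integrable and satisfies the diffuse-reflection
condition `g(v) = ∫ g dμ` for a.e. incoming `v`, then
`√(2π) ∫ g² M (v·n) dv = ∫ (g - ∫ g dμ)² dμ ≥ 0`. -/
theorem linearized_darrozes_guiraud
    (d : ℕ) (hd : 1 ≤ d)
    (n : EuclideanSpace ℝ (Fin d)) (hn : ‖n‖ = 1)
    (g : EuclideanSpace ℝ (Fin d) → ℝ) (hmeas : Measurable g)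
    (hL2 : Integrable (fun v => g v ^ 2) (bdryMeasure d n))
    (hint : Integrable (fun v => g v ^ 2 * gaussM v * |⟪v, n⟫_ℝ|) volume)
    (hbc : ∀ᵐ v : EuclideanSpace ℝ (Fin d) ∂volume,
      ⟪v, n⟫_ℝ < 0 → g v = ∫ w, g w ∂(bdryMeasure d n)) :
    IsProbabilityMeasure (bdryMeasure d n) ∧
    Real.sqrt (2 * π) * (∫ v : EuclideanSpace ℝ (Fin d), g v ^ 2 * gaussM v * ⟪v, n⟫_ℝ) =
      (∫ v, (g v - ∫ w, g w ∂(bdryMeasure d n)) ^ 2 ∂(bdryMeasure d n)) ∧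
    0 ≤ Real.sqrt (2 * π) *
      ∫ v : EuclideanSpace ℝ (Fin d), g v ^ 2 * gaussM v * ⟪v, n⟫_ℝ :=
  linearized_darrozes_guiraud_general d n hn g hmeas hL2 hint hbc
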